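/- arXiv:2509.16907 — 7 statements merged into one kernel-verified Lean document; each statement's English description precedes it below -/
import Mathlib

section
/- Let R_α denote the 2×2 rotation matrix by angle α, let λ be any 2×2 real matrix with principal stretches λ₁, λ₂ (the eigenvalues of (λᵀλ)^{1/2}), and let e₁ = (1,0)ᵀ. Then |(λ R_α − R_α λ) e₁| = |sin α| · |λ₂ − λ₁| if det λ ≥ 0, and |(λ R_α − R_α λ) e₁| = |sin α| · (λ₁ + λ₂) if det λ < 0. -/
open Matrix Real

/-- Rotation matrix by angle `α`. -/
noncomputable def Rot (α : ℝ) : Matrix (Fin 2) (Fin 2) ℝ :=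
  !![Real.cos α, -Real.sin α; Real.sin α, Real.cos α]

/-- `R ∈ SO(2)`. -/
def IsSO2 (R : Matrix (Fin 2) (Fin 2) ℝ) : Prop := R * Rᵀ = 1 ∧ R.det = 1

/-- `R ∈ O(2)`. -/
def IsO2 (R : Matrix (Fin 2) (Fin 2) ℝ) : Prop := R * Rᵀ = 1

/-- Euclidean norm on `ℝ²`. -/
noncomputable def norm2 (v : Fin 2 → ℝ) : ℝ := Real.sqrt (v 0 ^ 2 + v 1 ^ 2)

/-- `s1, s2` are the (unordered) singular values of the 2×2 matrix `A`,
i.e. the eigenvalues of `(AᵀA)^{1/2}`: equivalently, they are nonnegative,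
their product is `|det A|` and the sum of their squares is `trace (AᵀA)`. -/
def IsSingularValues (A : Matrix (Fin 2) (Fin 2) ℝ) (s1 s2 : ℝ) : Prop :=
  0 ≤ s1 ∧ 0 ≤ s2 ∧ s1 * s2 = |A.det| ∧ s1 ^ 2 + s2 ^ 2 = (Aᵀ * A).trace

/-- `|(λ R_α − R_α λ) e₁|` in terms of the principal stretches. -/
theorem stmt_2 (A : Matrix (Fin 2) (Fin 2) ℝ) (α s1 s2 : ℝ)
    (hs : IsSingularValues A s1 s2) :
    (0 ≤ A.det →
      norm2 ((A * Rot α - Rot α * A).mulVec ![1, 0]) = |Real.sin α| * |s2 - s1|) ∧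
    (A.det < 0 →
      norm2 ((A * Rot α - Rot α * A).mulVec ![1, 0]) = |Real.sin α| * (s1 + s2)) := by
  obtain ⟨h1, h2, hprod, htr⟩ := hs
  have hdet : A.det = A 0 0 * A 1 1 - A 0 1 * A 1 0 := by
    rw [Matrix.det_fin_two]
  have htr' : s1 ^ 2 + s2 ^ 2 =
      A 0 0 ^ 2 + A 0 1 ^ 2 + A 1 0 ^ 2 + A 1 1 ^ 2 := by
    rw [htr, Matrix.trace_fin_two]
    simp [Matrix.mul_apply, Matrix.transpose_apply, Fin.sum_univ_two]
    ring
  have hv : (A * Rot α - Rot α * A).mulVec ![1, 0] =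
      ![(A 0 1 + A 1 0) * Real.sin α, (A 1 1 - A 0 0) * Real.sin α] := by
    funext i
    fin_cases i <;>
      simp [Rot, Matrix.mulVec, Matrix.mul_apply, Fin.sum_univ_two,
        Matrix.sub_apply, Matrix.vecMul, dotProduct] <;> ring
  have key : norm2 ((A * Rot α - Rot α * A).mulVec ![1, 0]) =
      |Real.sin α| * Real.sqrt ((A 0 1 + A 1 0) ^ 2 + (A 1 1 - A 0 0) ^ 2) := by
    rw [hv]
    show Real.sqrt _ = _
    have : ((A 0 1 + A 1 0) * Real.sin α) ^ 2 + ((A 1 1 - A 0 0) * Real.sin α) ^ 2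
        = Real.sin α ^ 2 * ((A 0 1 + A 1 0) ^ 2 + (A 1 1 - A 0 0) ^ 2) := by ring
    simp only [Matrix.cons_val_zero, Matrix.cons_val_one, Matrix.head_cons]
    rw [this, Real.sqrt_mul (sq_nonneg _), Real.sqrt_sq_eq_abs]
  constructor
  · intro hd
    have habs : |A.det| = A.det := abs_of_nonneg hd
    have : (A 0 1 + A 1 0) ^ 2 + (A 1 1 - A 0 0) ^ 2 = (s2 - s1) ^ 2 := by
      have := htr'
      have hp : s1 * s2 = A 0 0 * A 1 1 - A 0 1 * A 1 0 := by
        rw [hprod, habs, hdet]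
      nlinarith [htr', hp]
    rw [key, this, Real.sqrt_sq_eq_abs]
  · intro hd
    have habs : |A.det| = -A.det := abs_of_neg hd
    have : (A 0 1 + A 1 0) ^ 2 + (A 1 1 - A 0 0) ^ 2 = (s1 + s2) ^ 2 := by
      have hp : s1 * s2 = -(A 0 0 * A 1 1 - A 0 1 * A 1 0) := by
        rw [hprod, habs, hdet]
      nlinarith [htr', hp]
    have habs2 : |s1 + s2| = s1 + s2 := abs_of_nonneg (by linarith)
    rw [key, this, Real.sqrt_sq_eq_abs, habs2]
end

section
/- Let λ be a 2×2 real matrix, e any unit vector in ℝ², and α ∈ ℝ with sin α ≠ 0. If (λ R_α − R_α λ) e = 0, then the two singular values of λ are equal and det λ ≥ 0; consequently λ = c R for some c ≥ 0 and R ∈ SO(2). -/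
open Matrix Real
set_option maxHeartbeats 1600000

/-- if `(λ R_α − R_α λ) e = 0` for a unit vector `e` and `sin α ≠ 0`,
then the singular values of `λ` are equal, `det λ ≥ 0`, and `λ = c R` with
`c ≥ 0` and `R ∈ SO(2)`. -/
theorem stmt_3 (A : Matrix (Fin 2) (Fin 2) ℝ) (e : Fin 2 → ℝ) (α : ℝ)
    (he : norm2 e = 1) (hα : Real.sin α ≠ 0)
    (h : (A * Rot α - Rot α * A).mulVec e = 0) :
    (∃ s : ℝ, IsSingularValues A s s) ∧ 0 ≤ A.det ∧
    ∃ (c : ℝ) (R : Matrix (Fin 2) (Fin 2) ℝ), 0 ≤ c ∧ IsSO2 R ∧ A = c • R := by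
  obtain ⟨a, b, c, d, hA⟩ : ∃ a b c d, A = !![a, b; c, d] :=
    ⟨A 0 0, A 0 1, A 1 0, A 1 1, by ext i j; fin_cases i <;> fin_cases j <;> rfl⟩
  subst hA
  have he' : e 0 ^ 2 + e 1 ^ 2 = 1 := by
    have h2 : Real.sqrt (e 0 ^ 2 + e 1 ^ 2) = 1 := he
    nlinarith [Real.sq_sqrt (by positivity : (0:ℝ) ≤ e 0 ^ 2 + e 1 ^ 2)]
  have h0 := congrFun h 0
  have h1 := congrFun h 1
  simp [Rot, Matrix.mulVec, Matrix.mul_apply, Fin.sum_univ_two, dotProduct] at h0 h1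
  have hs1 : (b + c) * e 0 + (d - a) * e 1 = 0 := by
    apply mul_left_cancel₀ hα; ring_nf; ring_nf at h0; linarith
  have hs2 : (d - a) * e 0 - (b + c) * e 1 = 0 := by
    apply mul_left_cancel₀ hα; ring_nf; ring_nf at h1; linarith
  have hpq : (b + c) ^ 2 + (d - a) ^ 2 = 0 := by
    linear_combination ((b + c) * e 0 + (d - a) * e 1) * hs1 +
      ((d - a) * e 0 - (b + c) * e 1) * hs2 - ((b + c) ^ 2 + (d - a) ^ 2) * he'
  have hb : c = -b := by nlinarith [sq_nonneg (b + c), sq_nonneg (d - a)]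
  have hd : d = a := by nlinarith [sq_nonneg (b + c), sq_nonneg (d - a)]
  subst hb hd
  have hdet : (!![d, b; -b, d]).det = d ^ 2 + b ^ 2 := by
    simp [Matrix.det_fin_two]; ring
  have htr : ((!![d, b; -b, d])ᵀ * !![d, b; -b, d]).trace = 2 * (d ^ 2 + b ^ 2) := by
    simp [Matrix.trace, Matrix.mul_apply, Fin.sum_univ_two, Matrix.transpose]; ring
  set s := Real.sqrt (d ^ 2 + b ^ 2) with hs
  have hsnn : 0 ≤ s := Real.sqrt_nonneg _
  have hssq : s ^ 2 = d ^ 2 + b ^ 2 := Real.sq_sqrt (by positivity)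
  refine ⟨⟨s, hsnn, hsnn, ?_, ?_⟩, ?_, ?_⟩
  · rw [hdet, abs_of_nonneg (by positivity)]; nlinarith
  · rw [htr]; nlinarith
  · rw [hdet]; positivity
  · rcases eq_or_lt_of_le hsnn with h0' | h0'
    · have hz : d ^ 2 + b ^ 2 = 0 := by nlinarith
      have ha : d = 0 := by nlinarith [sq_nonneg d, sq_nonneg b]
      have hbz : b = 0 := by nlinarith [sq_nonneg d, sq_nonneg b]
      refine ⟨0, 1, le_refl 0, ⟨by simp, by simp⟩, ?_⟩
      subst ha hbz
      ext i j; fin_cases i <;> fin_cases j <;> simp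
    · have hspos : (0:ℝ) < s := h0'
      have hsne : s ≠ 0 := ne_of_gt hspos
      have hmul : s * s = d ^ 2 + b ^ 2 := by nlinarith
      refine ⟨s, !![d / s, b / s; -b / s, d / s], hsnn, ⟨?_, ?_⟩, ?_⟩
      · ext i j
        fin_cases i <;> fin_cases j <;>
          simp [Matrix.mul_apply, Fin.sum_univ_two, Matrix.one_apply, Matrix.vecHead,
            Matrix.vecTail] <;>
          field_simp <;> ring_nf <;> nlinarith
      · rw [Matrix.det_fin_two]; simp; field_simp; nlinarith
      · ext i j
        fin_cases i <;> fin_cases j <;> simp <;> field_simp <;> ring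
end

section
/- For real numbers λ₁ ≥ λ₂ ≥ 0, one has (λ₁ − λ₂)² + (√(¾λ₁² + ¼λ₂²) − 1)₊² ≥ ¼ [(λ₁ − 1)₊² + (λ₂ − 1)₊²], where (x)₊ = max{x, 0}. -/
/-- elementary inequality used for the Kagome compressive bound. -/
theorem stmt_5 (l1 l2 : ℝ) (h12 : l2 ≤ l1) (h2 : 0 ≤ l2) :
    (1/4) * ((max (l1 - 1) 0) ^ 2 + (max (l2 - 1) 0) ^ 2) ≤
      (l1 - l2) ^ 2 +
        (max (Real.sqrt ((3/4) * l1 ^ 2 + (1/4) * l2 ^ 2) - 1) 0) ^ 2 := by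
  have h1 : 0 ≤ l1 := le_trans h2 h12
  set s := Real.sqrt ((3/4) * l1 ^ 2 + (1/4) * l2 ^ 2) with hs
  have hs0 : 0 ≤ s := Real.sqrt_nonneg _
  have hssq : s ^ 2 = (3/4) * l1 ^ 2 + (1/4) * l2 ^ 2 :=
    Real.sq_sqrt (by nlinarith)
  have hst : (3 * l1 + l2) / 4 ≤ s := by
    nlinarith [sq_nonneg (l1 - l2), sq_nonneg (s - (3 * l1 + l2) / 4)]
  set m := max (s - 1) 0 with hm
  have hm0 : 0 ≤ m := le_max_right _ _
  have hm1 : s - 1 ≤ m := le_max_left _ _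
  have hmt : (3 * l1 + l2) / 4 - 1 ≤ m := by linarith
  set a := max (l1 - 1) 0 with ha
  set b := max (l2 - 1) 0 with hb
  clear_value s m a b
  clear hs hssq hst hm hm1 hs0
  rcases le_or_gt l1 1 with hc1 | hc1
  · have ha' : a = 0 := by rw [ha, max_eq_right]; linarith
    have hb' : b = 0 := by rw [hb, max_eq_right]; linarith
    rw [ha', hb']
    nlinarith [sq_nonneg (l1 - l2), sq_nonneg m]
  · have ha' : a = l1 - 1 := by rw [ha, max_eq_left]; linarith
    rcases le_or_gt l2 1 with hc2 | hc2
    · have hb' : b = 0 := by rw [hb, max_eq_right]; linarith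
      rcases le_or_gt ((3 * l1 + l2) / 4) 1 with hc3 | hc3
      · rw [ha', hb']
        nlinarith [sq_nonneg m]
      · have hm2 : ((3 * l1 + l2) / 4 - 1) ^ 2 ≤ m ^ 2 :=
          pow_le_pow_left₀ (by linarith) hmt 2
        rw [ha', hb']
        nlinarith [hm2, mul_nonneg (by linarith : (0:ℝ) ≤ l1 - 1)
          (by linarith : (0:ℝ) ≤ 1 - l2)]
    · have hb' : b = l2 - 1 := by rw [hb, max_eq_left]; linarith
      have hm2 : ((3 * l1 + l2) / 4 - 1) ^ 2 ≤ m ^ 2 :=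
        pow_le_pow_left₀ (by linarith) hmt 2
      rw [ha', hb']
      nlinarith [hm2, sq_nonneg (l1 - l2), sq_nonneg (l1 - 1)]
end

section
/- For real numbers λ₁ ≥ λ₂ ≥ 0, one has (λ₁ − λ₂)² + (√(½λ₁² + ½λ₂²) − 1)₊² ≥ ¼ [(λ₁ − 1)₊² + (λ₂ − 1)₊²], where (x)₊ = max{x, 0}. -/
/-- elementary inequality used for the Rotating Squares compressive bound. -/
theorem stmt_6 (l1 l2 : ℝ) (h12 : l2 ≤ l1) (h2 : 0 ≤ l2) :
    (1/4) * ((max (l1 - 1) 0) ^ 2 + (max (l2 - 1) 0) ^ 2) ≤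
      (l1 - l2) ^ 2 +
        (max (Real.sqrt ((1/2) * l1 ^ 2 + (1/2) * l2 ^ 2) - 1) 0) ^ 2 := by
  set s := Real.sqrt ((1/2) * l1 ^ 2 + (1/2) * l2 ^ 2) with hs
  have h1 : 0 ≤ l1 := le_trans h2 h12
  have hs2 : l2 ≤ s := by
    rw [hs, Real.le_sqrt h2] <;> nlinarith
  have hs1 : s ≤ l1 := by
    rw [hs, show (1/2) * l1 ^ 2 + (1/2) * l2 ^ 2 = l1^2 - ((1/2)*l1^2 - (1/2)*l2^2) by ring]
    calc Real.sqrt (l1^2 - ((1/2)*l1^2 - (1/2)*l2^2)) ≤ Real.sqrt (l1^2) := by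
          apply Real.sqrt_le_sqrt; nlinarith
      _ = l1 := Real.sqrt_sq h1
  set b := max (s - 1) 0 with hb
  have hbnn : 0 ≤ b := le_max_right _ _
  have hbs : s - 1 ≤ b := le_max_left _ _
  have hA : max (l1 - 1) 0 ≤ (l1 - l2) + b := by
    apply max_le _ (by linarith)
    linarith
  have hB : max (l2 - 1) 0 ≤ b := max_le (by linarith) hbnn
  have hAnn : 0 ≤ max (l1 - 1) 0 := le_max_right _ _
  have hBnn : 0 ≤ max (l2 - 1) 0 := le_max_right _ _
  nlinarith [sq_nonneg ((l1 - l2) - b), sq_nonneg (l1 - l2), mul_self_le_mul_self hAnn hA, mul_self_le_mul_self hBnn hB]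
end

section
/- For every θ ∈ ℝ, max{cos²θ, cos²(θ + π/3), cos²(θ + 2π/3)} ≥ 3/4. -/
open Real

lemma aux_cos_sq (x : ℝ) (m : ℤ) (hx : |x| ≤ π/3) (t : ℝ)
    (ht : 2*t = x + m*(2*π)) : 3/4 ≤ Real.cos t ^ 2 := by
  have h1 : Real.cos (2*t) = Real.cos x := by
    rw [ht, Real.cos_add_int_mul_two_pi]
  have h2 : (1:ℝ)/2 ≤ Real.cos x := by
    rw [← Real.cos_abs]
    have := Real.cos_le_cos_of_nonneg_of_le_pi (abs_nonneg x)
      (by linarith [Real.pi_pos] : π/3 ≤ π) hx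
    rwa [Real.cos_pi_div_three] at this
  have := Real.cos_sq t
  rw [h1] at this
  linarith

/-- `max{cos²θ, cos²(θ+π/3), cos²(θ+2π/3)} ≥ 3/4`. -/
theorem stmt_7 (θ : ℝ) :
    3/4 ≤ max ((Real.cos θ) ^ 2)
      (max ((Real.cos (θ + π/3)) ^ 2) ((Real.cos (θ + 2*π/3)) ^ 2)) := by
  have hpi := Real.pi_pos
  set c : ℝ := 2*π/3 with hc
  have hcpos : 0 < c := by positivity
  set n : ℤ := round (2*θ / c) with hn
  set x : ℝ := 2*θ - n*c with hx
  have hxb : |x| ≤ π/3 := by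
    have h := abs_sub_round (2*θ / c)
    have hx' : x = c * (2*θ/c - n) := by
      field_simp [hx]; ring
    rw [hx', abs_mul, abs_of_pos hcpos]
    calc c * |2*θ/c - n| ≤ c * (1/2) := by
          exact mul_le_mul_of_nonneg_left h hcpos.le
      _ = π/3 := by rw [hc]; ring
  have h3 : n % 3 = 0 ∨ n % 3 = 1 ∨ n % 3 = 2 := by omega
  rcases h3 with h | h | h
  · refine le_trans ?_ (le_max_left _ _)
    refine aux_cos_sq x (n/3) hxb θ ?_
    have hm : n = 3 * (n/3) := by omega
    have : (n:ℝ) = 3 * ((n/3 : ℤ) : ℝ) := by exact_mod_cast hm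
    rw [hx, hc]
    rw [hc] at hx
    push_cast [this]
    ring
  · refine le_trans ?_ (le_trans (le_max_right _ _) (le_max_right _ _))
    refine aux_cos_sq x ((n+2)/3) hxb (θ + 2*π/3) ?_
    have hm : n + 2 = 3 * ((n+2)/3) := by omega
    have : (n:ℝ) + 2 = 3 * (((n+2)/3 : ℤ) : ℝ) := by exact_mod_cast hm
    rw [hx, hc]
    have h' : (n:ℝ) = 3 * (((n+2)/3 : ℤ) : ℝ) - 2 := by linarith
    push_cast [h']
    ring
  · refine le_trans ?_ (le_trans (le_max_left _ _) (le_max_right _ _))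
    refine aux_cos_sq x ((n+1)/3) hxb (θ + π/3) ?_
    have hm : n + 1 = 3 * ((n+1)/3) := by omega
    have : (n:ℝ) + 1 = 3 * (((n+1)/3 : ℤ) : ℝ) := by exact_mod_cast hm
    rw [hx, hc]
    have h' : (n:ℝ) = 3 * (((n+1)/3 : ℤ) : ℝ) - 1 := by linarith
    push_cast [h']
    ring
end

section
/- Let λ be a 2×2 real matrix with singular values λ₁ ≥ λ₂ ≥ 0, and let e₁, e₂, e₃ be the unit vectors at angles 0, π/3, 2π/3 from the positive x-axis. Then (|λe₁| − 1)₊² + (|λe₂| − 1)₊² + (|λe₃| − 1)₊² ≥ (√(¾λ₁² + ¼λ₂²) − 1)₊². -/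
open Matrix Real

lemma key_aux (a b c s1 s2 : ℝ) (hs1 : 0 ≤ s1) (hs2 : 0 ≤ s2) (h12 : s2 ≤ s1)
    (htr : s1^2 + s2^2 = a + c) (hdet : (s1*s2)^2 = a*c - b^2) :
    3/4*s1^2 + 1/4*s2^2 ≤ a ∨
    3/4*s1^2 + 1/4*s2^2 ≤ 1/4*a + 3/4*c + Real.sqrt 3 / 2 * b ∨
    3/4*s1^2 + 1/4*s2^2 ≤ 1/4*a + 3/4*c - Real.sqrt 3 / 2 * b := by
  set d := s1^2 - s2^2 with hd
  have hd0 : 0 ≤ d := by nlinarith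
  have hdsq : d^2 = (a-c)^2 + 4*b^2 := by nlinarith
  by_cases hcase : d/2 ≤ a - c
  · left; nlinarith
  · push_neg at hcase
    have hdu : 0 ≤ d + (a - c) := by nlinarith [sq_nonneg (d + (a-c)), sq_nonneg (d - (a-c))]
    have h12b : (d + (a-c))^2 ≤ 12 * b^2 := by
      nlinarith [mul_nonneg hdu (by linarith : (0:ℝ) ≤ 2*d - 4*(a-c))]
    have h3 : Real.sqrt 3 ^ 2 = 3 := Real.sq_sqrt (by norm_num)
    have hb : d + (a-c) ≤ 2 * Real.sqrt 3 * |b| := by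
      have hsq : (d+(a-c))^2 ≤ (2*Real.sqrt 3*|b|)^2 := by
        rw [mul_pow, mul_pow, h3, sq_abs]; linarith
      have h' := Real.sqrt_le_sqrt hsq
      rwa [Real.sqrt_sq hdu, Real.sqrt_sq (by positivity)] at h'
    rcases abs_cases b with ⟨hb', _⟩ | ⟨hb', _⟩
    · right; left; rw [hb'] at hb; linarith
    · right; right; rw [hb'] at hb; linarith

lemma plus_sq_mono {x y : ℝ} (h : x ≤ y) : (max (x-1) 0)^2 ≤ (max (y-1) 0)^2 :=
  pow_le_pow_left₀ (le_max_right _ _) (max_le_max (by linarith) le_rfl) 2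

/-- lower bound for the Kagome spring stretching energy in the three
lattice directions (unit vectors at angles 0, π/3, 2π/3). -/
theorem stmt_10 (A : Matrix (Fin 2) (Fin 2) ℝ) (s1 s2 : ℝ)
    (hs : IsSingularValues A s1 s2) (h12 : s2 ≤ s1) :
    (max (Real.sqrt ((3/4) * s1 ^ 2 + (1/4) * s2 ^ 2) - 1) 0) ^ 2 ≤
      (max (norm2 (A.mulVec ![1, 0]) - 1) 0) ^ 2 +
      (max (norm2 (A.mulVec ![1/2, Real.sqrt 3 / 2]) - 1) 0) ^ 2 +
      (max (norm2 (A.mulVec ![-(1/2), Real.sqrt 3 / 2]) - 1) 0) ^ 2 := by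
  obtain ⟨hs1, hs2, hdet, htr⟩ := hs
  set p := A 0 0; set q := A 0 1; set r := A 1 0; set s := A 1 1
  have hdetA : A.det = p * s - q * r := by rw [Matrix.det_fin_two]
  have htr' : s1^2 + s2^2 = (p^2 + r^2) + (q^2 + s^2) := by
    rw [htr]
    simp [Matrix.trace, Matrix.mul_apply, Fin.sum_univ_two, Matrix.transpose_apply]
    ring
  have hdet' : (s1*s2)^2 = (p^2+r^2)*(q^2+s^2) - (p*q+r*s)^2 := by
    rw [hdet, sq_abs, hdetA]; ring
  have h3 : Real.sqrt 3 ^ 2 = 3 := Real.sq_sqrt (by norm_num)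
  have hn1 : norm2 (A.mulVec ![1, 0]) = Real.sqrt (p^2 + r^2) := by
    simp [norm2, Matrix.mulVec, dotProduct, Fin.sum_univ_two]; rfl
  have hn2 : norm2 (A.mulVec ![1/2, Real.sqrt 3 / 2]) =
      Real.sqrt (1/4*(p^2+r^2) + 3/4*(q^2+s^2) + Real.sqrt 3 / 2 * (p*q+r*s)) := by
    simp only [norm2, Matrix.mulVec, dotProduct, Fin.sum_univ_two]
    congr 1
    simp only [Matrix.cons_val_zero, Matrix.cons_val_one, Matrix.head_cons]
    linear_combination (q^2+s^2)/4 * h3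
  have hn3 : norm2 (A.mulVec ![-(1/2), Real.sqrt 3 / 2]) =
      Real.sqrt (1/4*(p^2+r^2) + 3/4*(q^2+s^2) - Real.sqrt 3 / 2 * (p*q+r*s)) := by
    simp only [norm2, Matrix.mulVec, dotProduct, Fin.sum_univ_two]
    congr 1
    simp only [Matrix.cons_val_zero, Matrix.cons_val_one, Matrix.head_cons]
    linear_combination (q^2+s^2)/4 * h3
  rcases key_aux (p^2+r^2) (p*q+r*s) (q^2+s^2) s1 s2 hs1 hs2 h12 htr' hdet' with h | h | h
  · have hm := plus_sq_mono (Real.sqrt_le_sqrt h)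
    rw [← hn1] at hm
    linarith [sq_nonneg (max (norm2 (A.mulVec ![1/2, Real.sqrt 3 / 2]) - 1) 0),
      sq_nonneg (max (norm2 (A.mulVec ![-(1/2), Real.sqrt 3 / 2]) - 1) 0)]
  · have hm := plus_sq_mono (Real.sqrt_le_sqrt h)
    rw [← hn2] at hm
    linarith [sq_nonneg (max (norm2 (A.mulVec ![1, 0]) - 1) 0),
      sq_nonneg (max (norm2 (A.mulVec ![-(1/2), Real.sqrt 3 / 2]) - 1) 0)]
  · have hm := plus_sq_mono (Real.sqrt_le_sqrt h)
    rw [← hn3] at hm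
    linarith [sq_nonneg (max (norm2 (A.mulVec ![1, 0]) - 1) 0),
      sq_nonneg (max (norm2 (A.mulVec ![1/2, Real.sqrt 3 / 2]) - 1) 0)]
end

section
/- Let λ be a 2×2 real matrix with singular values λ₁ ≥ λ₂ ≥ 0, and let e₁ = (1,0), e₂ = (0,1). Then (|λe₁| − 1)₊² + (|λe₂| − 1)₊² ≥ (√(½λ₁² + ½λ₂²) − 1)₊². -/
open Matrix Real

/-- lower bound for the Rotating Squares spring stretching energy in
the two lattice directions. -/
theorem stmt_11 (A : Matrix (Fin 2) (Fin 2) ℝ) (s1 s2 : ℝ)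
    (hs : IsSingularValues A s1 s2) (h12 : s2 ≤ s1) :
    (max (Real.sqrt ((1/2) * s1 ^ 2 + (1/2) * s2 ^ 2) - 1) 0) ^ 2 ≤
      (max (norm2 (A.mulVec ![1, 0]) - 1) 0) ^ 2 +
      (max (norm2 (A.mulVec ![0, 1]) - 1) 0) ^ 2 := by
  obtain ⟨hs1, hs2, -, htr⟩ := hs
  set a := norm2 (A.mulVec ![1, 0]) with ha
  set b := norm2 (A.mulVec ![0, 1]) with hb
  have ha0 : 0 ≤ a := Real.sqrt_nonneg _
  have hb0 : 0 ≤ b := Real.sqrt_nonneg _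
  have ha2 : a ^ 2 = (A 0 0) ^ 2 + (A 1 0) ^ 2 := by
    rw [ha, norm2, sq_sqrt (by positivity)]
    simp [Matrix.mulVec, dotProduct, Fin.sum_univ_two]
  have hb2 : b ^ 2 = (A 0 1) ^ 2 + (A 1 1) ^ 2 := by
    rw [hb, norm2, sq_sqrt (by positivity)]
    simp [Matrix.mulVec, dotProduct, Fin.sum_univ_two]
  have htr2 : (Aᵀ * A).trace = a ^ 2 + b ^ 2 := by
    rw [ha2, hb2]
    simp [Matrix.trace, Matrix.mul_apply, Fin.sum_univ_two, Matrix.diag]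
    ring
  have hsum : s1 ^ 2 + s2 ^ 2 = a ^ 2 + b ^ 2 := by rw [htr, htr2]
  -- √(½(s1²+s2²)) ≤ max a b
  have hmax0 : 0 ≤ max a b := le_trans ha0 (le_max_left _ _)
  have hle : Real.sqrt ((1/2) * s1 ^ 2 + (1/2) * s2 ^ 2) ≤ max a b := by
    rw [show (1/2 : ℝ) * s1 ^ 2 + (1/2) * s2 ^ 2 = (a ^ 2 + b ^ 2) / 2 by
      rw [← hsum]; ring]
    rw [show max a b = Real.sqrt ((max a b) ^ 2) from (Real.sqrt_sq hmax0).symm]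
    apply Real.sqrt_le_sqrt
    rcases le_total a b with h | h
    · rw [max_eq_right h]; nlinarith
    · rw [max_eq_left h]; nlinarith
  have key : (max (Real.sqrt ((1/2) * s1 ^ 2 + (1/2) * s2 ^ 2) - 1) 0) ^ 2 ≤
      (max (max a b - 1) 0) ^ 2 := by
    apply pow_le_pow_left₀ (le_max_right _ _)
    exact max_le_max (by linarith) le_rfl
  refine key.trans ?_
  rcases le_total a b with h | h
  · rw [max_eq_right h]
    nlinarith [sq_nonneg (max (a - 1) 0), le_max_right (a - 1) (0:ℝ)]
  · rw [max_eq_left h]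
    nlinarith [sq_nonneg (max (b - 1) 0), le_max_right (b - 1) (0:ℝ)]
end
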